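/- Let K be a finite field with q^m elements, let g_1, …, g_N ∈ K be linearly independent over F_q, and let 1 ≤ M ≤ N. Then the K-linear evaluation map from K^M to K^N sending (a_0, …, a_{M−1}) to the vector (Σ_{j=0}^{M−1} a_j g_i^{q^j})_{i=1}^{N} is injective; that is, the Gabidulin code of length N with M message symbols has dimension M over K, and the message coefficients are uniquely determined by the codeword. -/

import Mathlib

/-- The subfield `F_q = {a ∈ K : a ^ q = a}` of a field `K` of characteristic `p`,
where `q = p ^ e`. -/
def Fqsub (p e : ℕ) (K : Type*) [Field K] [Fact p.Prime] [CharP K p] : Subfield K where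
  carrier := {x : K | x ^ p ^ e = x}
  mul_mem' := by
    intro a b ha hb
    simp only [Set.mem_setOf_eq] at *
    rw [mul_pow, ha, hb]
  one_mem' := by simp
  add_mem' := by
    intro a b ha hb
    haveI : ExpChar K p := ExpChar.prime Fact.out
    simp only [Set.mem_setOf_eq] at *
    rw [add_pow_expChar_pow, ha, hb]
  zero_mem' := by
    simp only [Set.mem_setOf_eq]
    exact zero_pow (pow_ne_zero _ (Nat.Prime.ne_zero Fact.out))
  neg_mem' := by
    intro a ha
    haveI : ExpChar K p := ExpChar.prime Fact.out
    simp only [Set.mem_setOf_eq] at *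
    calc (-a) ^ p ^ e = (0 - a) ^ p ^ e := by rw [zero_sub]
    _ = 0 ^ p ^ e - a ^ p ^ e := sub_pow_expChar_pow 0 a e
    _ = -a := by
        rw [ha, zero_pow (pow_ne_zero _ (Nat.Prime.ne_zero (Fact.out : p.Prime))), zero_sub]
  inv_mem' := by
    intro x hx
    simp only [Set.mem_setOf_eq] at *
    rw [inv_pow, hx]

/-- The rank over `F_q` of a vector `v ∈ K^N`: the dimension over `F_q` of the
`F_q`-linear span of its coordinates. -/
noncomputable def rankFq (p e : ℕ) (K : Type*) [Field K] [Fact p.Prime] [CharP K p]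
    {N : ℕ} (v : Fin N → K) : ℕ :=
  Module.finrank (Fqsub p e K) (Submodule.span (Fqsub p e K) (Set.range v))

/-!
A nonzero message `c` gives the nonzero `q`-linearized polynomial `∑ c_j X^{q^j}`, of degree at
most `q^{M-1}`. Its evaluation map is `F_q`-linear, so if it vanishes at every `g_i` it vanishes on
their `F_q`-span, which has `q^N > q^{M-1}` elements: too many roots. The count `|F_q| = q` holds
because `X^q - X` divides `X^{q^m} - X`, which splits with simple roots in `K`.
-/

open Polynomial

theorem sub_dvd_pow_pow_sub {R : Type*} [CommRing R] (a : R) (q : ℕ) :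
    ∀ m : ℕ, a ^ q - a ∣ a ^ q ^ m - a
  | 0 => by simp
  | m + 1 => by
    have h : a ^ q ^ (m + 1) - a = ((a ^ q ^ m) ^ q - a ^ q) + (a ^ q - a) := by ring
    rw [h]
    exact dvd_add ((sub_dvd_pow_pow_sub a q m).trans (sub_dvd_pow_sub_pow _ _ q)) dvd_rfl

theorem splits_X_pow_sub_X_of_card_eq {K : Type*} [Field K] [Fintype K] {q m : ℕ}
    (hcard : Fintype.card K = q ^ m) : Splits (X ^ q - X : K[X]) := by
  have hsplit : Splits (X ^ Fintype.card K - X : K[X]) := by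
    rw [splits_iff_card_roots, FiniteField.roots_X_pow_card_sub_X,
      FiniteField.X_pow_card_sub_X_natDegree_eq K Fintype.one_lt_card]
    rfl
  refine hsplit.of_dvd (FiniteField.X_pow_card_sub_X_ne_zero K Fintype.one_lt_card) ?_
  rw [hcard]
  exact sub_dvd_pow_pow_sub X q m

section Fqsub

variable {p e : ℕ} [Fact p.Prime] {K : Type*} [Field K] [CharP K p]

theorem mem_Fqsub {x : K} : x ∈ Fqsub p e K ↔ x ^ p ^ e = x := Iff.rfl

theorem coe_Fqsub_eq_rootSet (he : e ≠ 0) :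
    (Fqsub p e K : Set K) = (X ^ p ^ e - X : K[X]).rootSet K := by
  ext x
  rw [mem_rootSet_of_ne (FiniteField.X_pow_card_pow_sub_X_ne_zero K he (Fact.out : p.Prime).one_lt)]
  simp [mem_Fqsub, sub_eq_zero]

theorem natCard_Fqsub [Fintype K] {m : ℕ} (he : e ≠ 0) (hcard : Fintype.card K = (p ^ e) ^ m) :
    Nat.card (Fqsub p e K) = p ^ e := by
  have hsep : (X ^ p ^ e - X : K[X]).Separable := galois_poly_separable p _ (dvd_pow_self p he)
  show Nat.card (Fqsub p e K : Set K) = _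
  rw [coe_Fqsub_eq_rootSet he, Nat.card_eq_fintype_card,
    card_rootSet_eq_natDegree hsep (by simpa using splits_X_pow_sub_X_of_card_eq hcard),
    FiniteField.X_pow_card_pow_sub_X_natDegree_eq K he (Fact.out : p.Prime).one_lt]

variable (p e K) in
def qFrobenius : K →ₗ[Fqsub p e K] K where
  toFun x := x ^ p ^ e
  map_add' x y := add_pow_expChar_pow x y p e
  map_smul' d x := by
    simp only [Subfield.smul_def, smul_eq_mul, mul_pow, RingHom.id_apply, mem_Fqsub.1 d.2]

theorem qFrobenius_pow_apply (j : ℕ) (x : K) : (qFrobenius p e K ^ j) x = x ^ (p ^ e) ^ j := by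
  rw [Module.End.pow_apply]
  exact congrFun (pow_iterate _ j) x

end Fqsub

theorem Polynomial.ncard_le_natDegree_of_forall_eval_eq_zero {R : Type*} [CommRing R]
    [IsDomain R] {P : R[X]} (hP : P ≠ 0) {s : Set R} (hs : ∀ x ∈ s, P.eval x = 0) :
    s.ncard ≤ P.natDegree := by
  refine le_trans (Set.ncard_le_ncard (fun x hx => ?_) (P.rootSet_finite R)) (P.ncard_rootSet_le R)
  rw [mem_rootSet_of_ne hP, coe_aeval_eq_eval]
  exact hs x hx

section LinearizedPoly

variable {R : Type*} [CommSemiring R] {M : ℕ}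

noncomputable def linearizedPoly (q : ℕ) (c : Fin M → R) : R[X] :=
  ∑ j, C (c j) * X ^ q ^ (j : ℕ)

theorem eval_linearizedPoly (q : ℕ) (c : Fin M → R) (x : R) :
    (linearizedPoly q c).eval x = ∑ j, c j * x ^ q ^ (j : ℕ) := by
  simp [linearizedPoly, eval_finsetSum]

theorem coeff_linearizedPoly_pow {q : ℕ} (hq : 1 < q) (c : Fin M → R) (j : Fin M) :
    (linearizedPoly q c).coeff (q ^ (j : ℕ)) = c j := by
  simp [linearizedPoly, coeff_C_mul, coeff_X_pow,
    (Nat.pow_right_injective hq).eq_iff, Fin.val_inj]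

theorem linearizedPoly_ne_zero {q : ℕ} (hq : 1 < q) {c : Fin M → R} (hc : c ≠ 0) :
    linearizedPoly q c ≠ 0 := by
  obtain ⟨j, hj⟩ := Function.ne_iff.1 hc
  intro h
  exact hj (by rw [← coeff_linearizedPoly_pow hq c j, h, coeff_zero, Pi.zero_apply])

theorem natDegree_linearizedPoly_le {q : ℕ} (hq : 0 < q) (c : Fin M → R) :
    (linearizedPoly q c).natDegree ≤ q ^ (M - 1) := by
  refine natDegree_sum_le_of_forall_le _ _ fun j _ => natDegree_C_mul_X_pow_le _ _ |>.trans ?_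
  exact Nat.pow_le_pow_right hq (by omega)

end LinearizedPoly

section Gabidulin

variable {p e : ℕ} [Fact p.Prime] {K : Type*} [Field K] [CharP K p] {M : ℕ}

theorem eval_linearizedPoly_eq_zero_of_mem_span {ι : Type*} {c : Fin M → K} {g : ι → K}
    (hc : ∀ i, (linearizedPoly (p ^ e) c).eval (g i) = 0) {x : K}
    (hx : x ∈ Submodule.span (Fqsub p e K) (Set.range g)) :
    (linearizedPoly (p ^ e) c).eval x = 0 := by
  set f : K →ₗ[Fqsub p e K] K := ∑ j, c j • qFrobenius p e K ^ (j : ℕ)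
  have hf (y : K) : f y = (linearizedPoly (p ^ e) c).eval y := by
    simp [f, eval_linearizedPoly, qFrobenius_pow_apply]
  have hker : Submodule.span (Fqsub p e K) (Set.range g) ≤ LinearMap.ker f :=
    Submodule.span_le.2 (by rintro _ ⟨i, rfl⟩; simp [hf, hc])
  simpa [hf] using hker hx

theorem eq_zero_of_forall_eval_linearizedPoly_eq_zero [Fintype K] {m N : ℕ} (he : e ≠ 0)
    (hcard : Fintype.card K = (p ^ e) ^ m) (hMN : M ≤ N) {g : Fin N → K}
    (hg : LinearIndependent (Fqsub p e K) g) {c : Fin M → K}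
    (hc : ∀ i, (linearizedPoly (p ^ e) c).eval (g i) = 0) : c = 0 := by
  by_contra hc0
  obtain ⟨j, -⟩ := Function.ne_iff.1 hc0
  have hq : 1 < p ^ e := Nat.one_lt_pow he (Fact.out : p.Prime).one_lt
  set S := Submodule.span (Fqsub p e K) (Set.range g)
  have hS : Nat.card S = (p ^ e) ^ N := by
    rw [Module.natCard_eq_pow_finrank (K := Fqsub p e K), natCard_Fqsub he hcard,
      finrank_span_eq_card hg, Fintype.card_fin]
  have hle : (p ^ e) ^ N ≤ (p ^ e) ^ (M - 1) := calc
    (p ^ e) ^ N = Nat.card S := hS.symm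
    _ = (S : Set K).ncard := Nat.card_coe_set_eq _
    _ ≤ (linearizedPoly (p ^ e) c).natDegree :=
      ncard_le_natDegree_of_forall_eval_eq_zero (linearizedPoly_ne_zero hq hc0)
        fun x hx => eval_linearizedPoly_eq_zero_of_mem_span hc hx
    _ ≤ (p ^ e) ^ (M - 1) := natDegree_linearizedPoly_le (by omega) c
  exact absurd hle (not_le.2 (Nat.pow_lt_pow_right hq (by have := j.2; omega)))

end Gabidulin

theorem gabidulin_encoding_injective_general
    (p e m : ℕ) [Fact p.Prime] (hq : 1 ≤ e)
    (K : Type*) [Field K] [Fintype K] [CharP K p]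
    (hcard : Fintype.card K = (p ^ e) ^ m)
    (N M : ℕ) (hMN : M ≤ N)
    (g : Fin N → K) (hg : LinearIndependent (Fqsub p e K) g) :
    Function.Injective
      (fun a : Fin M → K => fun i : Fin N => ∑ j, a j * g i ^ (p ^ e) ^ (j : ℕ)) := by
  intro a b hab
  rw [← sub_eq_zero]
  refine eq_zero_of_forall_eval_linearizedPoly_eq_zero (by omega) hcard hMN hg fun i => ?_
  simpa [eval_linearizedPoly, sub_mul, sub_eq_zero] using congrFun hab i

/-- For `g_1, …, g_N ∈ K` linearly independent over `F_q` and
`1 ≤ M ≤ N`, the `K`-linear evaluation map `K^M → K^N`,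
`(a_0, …, a_{M-1}) ↦ (∑_{j<M} a_j g_i^{q^j})_i`, is injective: the Gabidulin code of
length `N` with `M` message symbols has dimension `M` over `K`, and the message
coefficients are uniquely determined by the codeword. -/
theorem gabidulin_encoding_injective
    (p e m : ℕ) [Fact p.Prime] (hq : 1 ≤ e)
    (K : Type*) [Field K] [Fintype K] [CharP K p]
    (hcard : Fintype.card K = (p ^ e) ^ m)
    (N M : ℕ) (hM : 1 ≤ M) (hMN : M ≤ N)
    (g : Fin N → K) (hg : LinearIndependent (Fqsub p e K) g) :
    Function.Injective
      (fun a : Fin M → K => fun i : Fin N => ∑ j, a j * g i ^ (p ^ e) ^ (j : ℕ)) :=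
  gabidulin_encoding_injective_general p e m hq K hcard N M hMN g hg
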